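/- Let J_p(x) = λ_p (sin(px/2)/sin(x/2))⁴ be the Jackson kernel on [-π, π], where λ_p > 0 is chosen so that ∫_{-π}^{π} J_p(x) dx = 1. Then ∫_{-π}^{π} |t| J_p(t) dt ≤ C/p for an absolute constant C independent of p. -/
import Mathlib

open Real intervalIntegral

namespace JacksonAux

open MeasureTheory

noncomputable def f (p : ℕ) (x : ℝ) : ℝ := (Real.sin (p * x / 2) / Real.sin (x / 2)) ^ 4

lemma abs_sin_nat_mul_le (n : ℕ) (x : ℝ) : |Real.sin (n * x)| ≤ n * |Real.sin x| := by
  induction n with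
  | zero => simp
  | succ n ih =>
    have h : ((n + 1 : ℕ) : ℝ) * x = n * x + x := by push_cast; ring
    rw [h, Real.sin_add]
    calc |Real.sin (n * x) * Real.cos x + Real.cos (n * x) * Real.sin x|
        ≤ |Real.sin (n * x) * Real.cos x| + |Real.cos (n * x) * Real.sin x| := abs_add_le _ _
      _ ≤ |Real.sin (n * x)| * 1 + 1 * |Real.sin x| := by
          rw [abs_mul, abs_mul]
          gcongr <;> first | exact Real.abs_cos_le_one _ | exact abs_nonneg _
      _ ≤ (n : ℝ) * |Real.sin x| + |Real.sin x| := by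
          rw [mul_one, one_mul]
          gcongr
      _ = ((n + 1 : ℕ) : ℝ) * |Real.sin x| := by push_cast; ring

lemma f_nonneg (p : ℕ) (x : ℝ) : 0 ≤ f p x := by unfold f; positivity

lemma f_le (p : ℕ) (x : ℝ) : f p x ≤ (p : ℝ) ^ 4 := by
  unfold f
  rcases eq_or_ne (Real.sin (x / 2)) 0 with h | h
  · simp [h]
  · have h1 : |Real.sin (p * x / 2) / Real.sin (x / 2)| ≤ (p : ℝ) := by
      rw [abs_div, div_le_iff₀ (abs_pos.mpr h)]
      have h2 : (p : ℝ) * x / 2 = p * (x / 2) := by ring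
      rw [h2]
      exact abs_sin_nat_mul_le p (x / 2)
    calc (Real.sin (p * x / 2) / Real.sin (x / 2)) ^ 4
        = |Real.sin (p * x / 2) / Real.sin (x / 2)| ^ 4 := by
          rw [← abs_pow, abs_of_nonneg (by positivity)]
      _ ≤ (p : ℝ) ^ 4 := by gcongr

lemma f_meas (p : ℕ) : Measurable (f p) := by
  unfold f
  exact ((Real.measurable_sin.comp ((measurable_id.const_mul _).div_const _)).div
    (Real.measurable_sin.comp (measurable_id.div_const _))).pow_const 4

lemma f_int (p : ℕ) (a b : ℝ) : IntervalIntegrable (f p) volume a b := by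
  refine (_root_.intervalIntegrable_const (c := (p : ℝ) ^ 4)).mono_fun
    ((f_meas p).aestronglyMeasurable) ?_
  filter_upwards with x
  rw [Real.norm_eq_abs, Real.norm_eq_abs, abs_of_nonneg (f_nonneg p x),
    abs_of_nonneg (by positivity)]
  exact f_le p x

lemma g_int (p : ℕ) (a b : ℝ) :
    IntervalIntegrable (fun t => |t| * f p t) volume a b := by
  have hc : IntervalIntegrable (fun t : ℝ => |t| * (p : ℝ) ^ 4) volume a b :=
    (continuous_abs.mul continuous_const).intervalIntegrable a b
  refine hc.mono_fun ((measurable_abs.mul (f_meas p)).aestronglyMeasurable) ?_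
  filter_upwards with x
  rw [Real.norm_eq_abs, Real.norm_eq_abs,
    abs_of_nonneg (mul_nonneg (abs_nonneg x) (f_nonneg p x)),
    abs_of_nonneg (mul_nonneg (abs_nonneg x) (by positivity : (0 : ℝ) ≤ (p : ℝ) ^ 4))]
  exact mul_le_mul_of_nonneg_left (f_le p x) (abs_nonneg x)

lemma g_even (p : ℕ) (t : ℝ) : |(-t)| * f p (-t) = |t| * f p t := by
  unfold f
  rw [abs_neg]
  congr 2
  rw [show (p : ℝ) * (-t) / 2 = -((p : ℝ) * t / 2) by ring,
    show (-t) / 2 = -(t / 2) by ring, Real.sin_neg, Real.sin_neg, neg_div_neg_eq]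

lemma lower (p : ℕ) (hp : 1 ≤ p) :
    8 * (p : ℝ) ^ 3 / π ^ 3 ≤ ∫ x in (-π)..π, f p x := by
  have hp0 : (0 : ℝ) < p := by exact_mod_cast hp
  have hπ := Real.pi_pos
  have h1 : (0 : ℝ) < π / (2 * p) := by positivity
  have hab : π / (2 * p) ≤ π / p := by gcongr; linarith
  have hp1 : (1 : ℝ) ≤ p := by exact_mod_cast hp
  have hbd : π / p ≤ π := by
    rw [div_le_iff₀ hp0]
    nlinarith [hπ, hp1]
  have key : ∀ x ∈ Set.Icc (π / (2 * p)) (π / p), 2 * p / π * (2 * p / π) ^ 3 ≤ f p x := by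
    intro x hx
    obtain ⟨hx1, hx2⟩ := hx
    have hx0 : 0 < x := lt_of_lt_of_le h1 hx1
    have hpx : (p : ℝ) * x ≤ π := (le_div_iff₀' hp0).1 hx2
    have hxπ : x ≤ π := hx2.trans hbd
    have hs_pos : 0 < Real.sin (x / 2) :=
      Real.sin_pos_of_pos_of_lt_pi (by linarith) (by linarith)
    have hs_le : Real.sin (x / 2) ≤ x / 2 := Real.sin_le (by linarith)
    have hnum : (p : ℝ) * x / π ≤ Real.sin (p * x / 2) := by
      have h := Real.mul_le_sin (x := (p : ℝ) * x / 2) (by positivity) (by linarith)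
      calc (p : ℝ) * x / π = 2 / π * ((p : ℝ) * x / 2) := by ring
        _ ≤ _ := h
    have hratio : 2 * p / π ≤ Real.sin (p * x / 2) / Real.sin (x / 2) := by
      rw [le_div_iff₀ hs_pos]
      calc 2 * (p : ℝ) / π * Real.sin (x / 2) ≤ 2 * p / π * (x / 2) :=
            mul_le_mul_of_nonneg_left hs_le (by positivity)
        _ = (p : ℝ) * x / π := by ring
        _ ≤ _ := hnum
    have hpow : (2 * (p : ℝ) / π) ^ 4 ≤ (Real.sin (p * x / 2) / Real.sin (x / 2)) ^ 4 := by
      gcongr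
    calc 2 * (p : ℝ) / π * (2 * p / π) ^ 3 = (2 * (p : ℝ) / π) ^ 4 := by ring
      _ ≤ _ := hpow
  have step1 : (π / p - π / (2 * p)) * (2 * p / π * (2 * p / π) ^ 3)
      ≤ ∫ x in (π / (2 * p))..(π / p), f p x := by
    have h := intervalIntegral.integral_mono_on hab
      (_root_.intervalIntegrable_const (c := 2 * (p : ℝ) / π * (2 * p / π) ^ 3)) (f_int p _ _) key
    rw [intervalIntegral.integral_const, smul_eq_mul] at h
    exact h
  have step2 : (∫ x in (π / (2 * p))..(π / p), f p x) ≤ ∫ x in (-π)..π, f p x := by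
    apply intervalIntegral.integral_mono_interval (by linarith) hab hbd
    · filter_upwards with x using f_nonneg p x
    · exact f_int p _ _
  have hπ' : π ≠ 0 := hπ.ne'
  have hp' : (p : ℝ) ≠ 0 := hp0.ne'
  have harith : (π / p - π / (2 * p)) * (2 * p / π * (2 * p / π) ^ 3)
      = 8 * (p : ℝ) ^ 3 / π ^ 3 := by
    field_simp
    ring
  calc 8 * (p : ℝ) ^ 3 / π ^ 3 = _ := harith.symm
    _ ≤ _ := step1
    _ ≤ _ := step2

lemma upper (p : ℕ) (hp : 1 ≤ p) :
    (∫ t in (-π)..π, |t| * f p t) ≤ (2 + π ^ 4) * (p : ℝ) ^ 2 := by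
  have hp0 : (0 : ℝ) < p := by exact_mod_cast hp
  have hp1 : (1 : ℝ) ≤ p := by exact_mod_cast hp
  have hπ := Real.pi_pos
  set a : ℝ := 1 / p with ha
  have ha0 : 0 < a := by positivity
  have haπ : a ≤ π := by
    have : a ≤ 1 := by
      rw [ha]
      exact div_le_one_of_le₀ hp1 (by positivity)
    linarith [Real.pi_gt_three]
  have hp' : (p : ℝ) ≠ 0 := hp0.ne'
  -- split the integral
  have hsplit : (∫ t in (-π)..π, |t| * f p t)
      = (∫ t in (-π)..(-a), |t| * f p t) + (∫ t in (-a)..a, |t| * f p t)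
        + (∫ t in a..π, |t| * f p t) := by
    rw [add_assoc,
      intervalIntegral.integral_add_adjacent_intervals (g_int p (-a) a) (g_int p a π),
      intervalIntegral.integral_add_adjacent_intervals (g_int p (-π) (-a)) (g_int p (-a) π)]
  -- middle bound
  have hmid : (∫ t in (-a)..a, |t| * f p t) ≤ 2 * (p : ℝ) ^ 2 := by
    have hb : ∀ t ∈ Set.Icc (-a) a, |t| * f p t ≤ (p : ℝ) ^ 3 := by
      intro t ht
      have hta : |t| ≤ a := abs_le.2 ⟨ht.1, ht.2⟩
      calc |t| * f p t ≤ a * (p : ℝ) ^ 4 :=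
            mul_le_mul hta (f_le p t) (f_nonneg p t) ha0.le
        _ = (p : ℝ) ^ 3 := by rw [ha]; field_simp
    have h := intervalIntegral.integral_mono_on (a := -a) (b := a) (by linarith) (g_int p (-a) a)
      (_root_.intervalIntegrable_const (c := (p : ℝ) ^ 3)) hb
    rw [intervalIntegral.integral_const, smul_eq_mul] at h
    calc (∫ t in (-a)..a, |t| * f p t) ≤ (a - (-a)) * (p : ℝ) ^ 3 := h
      _ = 2 * (p : ℝ) ^ 2 := by rw [ha]; field_simp; ring
  -- pointwise tail bound
  have htail_pt : ∀ t ∈ Set.Icc a π, |t| * f p t ≤ π ^ 4 * t ^ (-3 : ℤ) := by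
    intro t ht
    have ht0 : 0 < t := lt_of_lt_of_le ha0 ht.1
    have htπ : t ≤ π := ht.2
    have hs_pos : 0 < Real.sin (t / 2) :=
      Real.sin_pos_of_pos_of_lt_pi (by linarith) (by linarith)
    have h1 : t / π ≤ Real.sin (t / 2) := by
      have h := Real.mul_le_sin (x := t / 2) (by linarith) (by linarith)
      calc t / π = 2 / π * (t / 2) := by ring
        _ ≤ _ := h
    have h2 : t / Real.sin (t / 2) ≤ π := by
      rw [div_le_iff₀ hs_pos]
      calc t = π * (t / π) := by field_simp
        _ ≤ π * Real.sin (t / 2) := mul_le_mul_of_nonneg_left h1 hπ.le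
    have h3 : (t / Real.sin (t / 2)) ^ 4 ≤ π ^ 4 := by
      gcongr

    have h4 : Real.sin ((p : ℝ) * t / 2) ^ 4 ≤ 1 := by
      nlinarith [Real.sin_sq_le_one ((p : ℝ) * t / 2), sq_nonneg (Real.sin ((p : ℝ) * t / 2))]
    have hz : (t : ℝ) ^ (-3 : ℤ) = (t ^ 3)⁻¹ := by
      rw [zpow_neg]
      norm_cast
    rw [abs_of_nonneg ht0.le, hz, ← div_eq_mul_inv,
      le_div_iff₀ (by positivity : (0 : ℝ) < t ^ 3)]
    have hkey : t * f p t * t ^ 3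
        = (t / Real.sin (t / 2)) ^ 4 * Real.sin ((p : ℝ) * t / 2) ^ 4 := by
      unfold f
      field_simp
    rw [hkey]
    calc (t / Real.sin (t / 2)) ^ 4 * Real.sin ((p : ℝ) * t / 2) ^ 4 ≤ π ^ 4 * 1 :=
        mul_le_mul h3 h4 (by positivity) (by positivity)
      _ = π ^ 4 := mul_one _
  have h0not : (0 : ℝ) ∉ Set.uIcc a π := by
    rw [Set.uIcc_of_le haπ, Set.mem_Icc]
    push_neg
    intro h
    linarith
  have hBint : IntervalIntegrable (fun t : ℝ => π ^ 4 * t ^ (-3 : ℤ)) volume a π :=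
    (intervalIntegrable_zpow (Or.inr h0not)).const_mul _
  have ha2 : a ^ (-2 : ℤ) = (p : ℝ) ^ 2 := by
    have h : a ^ (-2 : ℤ) = (a ^ 2)⁻¹ := by
      rw [zpow_neg]
      norm_cast
    rw [h, ha]
    field_simp
  have hπ2 : (0 : ℝ) < π ^ (-2 : ℤ) := by positivity
  have htail : (∫ t in a..π, |t| * f p t) ≤ π ^ 4 * (p : ℝ) ^ 2 / 2 := by
    have hmono := intervalIntegral.integral_mono_on haπ (g_int p _ _) hBint htail_pt
    have hval : (∫ t in a..π, π ^ 4 * t ^ (-3 : ℤ))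
        = π ^ 4 * ((π ^ (-2 : ℤ) - a ^ (-2 : ℤ)) / (-2)) := by
      rw [intervalIntegral.integral_const_mul, integral_zpow (Or.inr ⟨by norm_num, h0not⟩)]
      norm_num
    rw [hval, ha2] at hmono
    have h4 : (0 : ℝ) < π ^ 4 := by positivity
    nlinarith [hmono, mul_pos h4 hπ2]
  have hleft : (∫ t in (-π)..(-a), |t| * f p t) = ∫ t in a..π, |t| * f p t := by
    rw [← intervalIntegral.integral_comp_neg (fun t => |t| * f p t)]
    apply intervalIntegral.integral_congr
    intro t _
    exact g_even p t
  rw [hsplit, hleft]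
  nlinarith [htail, hmid]

end JacksonAux

/-- First-moment bound for the Jackson kernel: if
`J_p(x) = λ_p (sin(px/2)/sin(x/2))⁴` with `λ_p > 0` chosen so that
`∫_{-π}^{π} J_p = 1`, then `∫_{-π}^{π} |t| J_p(t) dt ≤ C/p` for an absolute
constant `C`. -/
theorem stmt_4 :
    ∃ C : ℝ, 0 < C ∧ ∀ (p : ℕ), 1 ≤ p → ∀ lam : ℝ, 0 < lam →
      (∫ x in (-π)..π, lam * (Real.sin (p * x / 2) / Real.sin (x / 2)) ^ 4) = 1 →
      (∫ t in (-π)..π, |t| * (lam * (Real.sin (p * t / 2) / Real.sin (t / 2)) ^ 4))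
        ≤ C / p := by
  have hπ := Real.pi_pos
  refine ⟨π ^ 3 * (2 + π ^ 4) / 8, by positivity, ?_⟩
  intro p hp lam hlam hnorm
  have hp0 : (0 : ℝ) < p := by exact_mod_cast hp
  have hI := JacksonAux.lower p hp
  have hnorm' : lam * (∫ x in (-π)..π, JacksonAux.f p x) = 1 := by
    rw [← intervalIntegral.integral_const_mul]
    exact hnorm
  have hIpos : 0 < ∫ x in (-π)..π, JacksonAux.f p x :=
    lt_of_lt_of_le (by positivity) hI
  have hlam_ub : lam ≤ π ^ 3 / (8 * (p : ℝ) ^ 3) := by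
    have hL : (0 : ℝ) < 8 * (p : ℝ) ^ 3 / π ^ 3 := by positivity
    have hlam_eq : lam = 1 / ∫ x in (-π)..π, JacksonAux.f p x := by
      field_simp
      linarith [hnorm']
    rw [hlam_eq]
    calc 1 / (∫ x in (-π)..π, JacksonAux.f p x)
        ≤ 1 / (8 * (p : ℝ) ^ 3 / π ^ 3) := one_div_le_one_div_of_le hL hI
      _ = π ^ 3 / (8 * (p : ℝ) ^ 3) := one_div_div _ _
  have hM : (∫ t in (-π)..π, |t| * (lam * (Real.sin (p * t / 2) / Real.sin (t / 2)) ^ 4))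
      = lam * ∫ t in (-π)..π, |t| * JacksonAux.f p t := by
    rw [← intervalIntegral.integral_const_mul]
    apply intervalIntegral.integral_congr
    intro t _
    show |t| * (lam * (Real.sin (p * t / 2) / Real.sin (t / 2)) ^ 4)
      = lam * (|t| * JacksonAux.f p t)
    unfold JacksonAux.f
    ring
  rw [hM]
  have hMnn : 0 ≤ ∫ t in (-π)..π, |t| * JacksonAux.f p t := by
    apply intervalIntegral.integral_nonneg (by linarith)
    intro t _
    exact mul_nonneg (abs_nonneg t) (JacksonAux.f_nonneg p t)
  have hMu := JacksonAux.upper p hp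
  calc lam * (∫ t in (-π)..π, |t| * JacksonAux.f p t)
      ≤ π ^ 3 / (8 * (p : ℝ) ^ 3) * ((2 + π ^ 4) * (p : ℝ) ^ 2) :=
        mul_le_mul hlam_ub hMu hMnn (by positivity)
    _ = π ^ 3 * (2 + π ^ 4) / 8 / p := by
        field_simp
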